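/- arXiv:1511.07715 — 4 statements merged into one kernel-verified Lean document; each statement's English description precedes it below -/
import Mathlib

section
/- Let O be a finite set, w a real-valued weight on the edges of K_O, and g : ℝ → ℝ a strictly increasing function. Then a spanning tree T is a minimum spanning tree of w if and only if T is a minimum spanning tree of the weight g ∘ w. -/
open SimpleGraph Finset

variable {V : Type*} [Fintype V] [DecidableEq V]

/-- Total weight of (the edge set of) a simple graph `T` under edge weights `w`. -/
noncomputable def totalWeight (w : Sym2 V → ℝ) (T : SimpleGraph V) : ℝ :=
  ∑ e ∈ (Set.toFinite T.edgeSet).toFinset, w e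

/-- `T` is a minimum spanning tree of the complete graph on `V` with weights `w`. -/
def IsMST (w : Sym2 V → ℝ) (T : SimpleGraph V) : Prop :=
  T.IsTree ∧ ∀ T' : SimpleGraph V, T'.IsTree → totalWeight w T ≤ totalWeight w T'

/-- A weight on the complete graph: nonnegative, vanishing on the diagonal. -/
def IsWeight (d : Sym2 V → ℝ) : Prop :=
  (∀ e, 0 ≤ d e) ∧ ∀ x : V, d s(x, x) = 0

/-- An ultra-metric, encoded as a function on unordered pairs. -/
def IsUltrametric (u : Sym2 V → ℝ) : Prop :=
  IsWeight u ∧ ∀ x y z : V, u s(x, z) ≤ max (u s(x, y)) (u s(y, z))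

/-- A (pseudo-)metric, encoded as a function on unordered pairs. -/
def IsMetric (d : Sym2 V → ℝ) : Prop :=
  IsWeight d ∧ ∀ x y z : V, d s(x, z) ≤ d s(x, y) + d s(y, z)

/-- The single linkage ultra-metric of a weight `d`. -/
noncomputable def SL (d : Sym2 V → ℝ) (e : Sym2 V) : ℝ :=
  sSup {r | ∃ u : Sym2 V → ℝ, IsUltrametric u ∧ u ≤ d ∧ u e = r}

/-- Maximum weight of an edge along a walk (0 for the empty walk). -/
noncomputable def pathMax (w : Sym2 V → ℝ) {T : SimpleGraph V} {x y : V}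
    (p : T.Walk x y) : ℝ :=
  (p.edges.map w).foldr max 0

/-- Sum of weights of the edges along a walk. -/
noncomputable def pathSum (w : Sym2 V → ℝ) {T : SimpleGraph V} {x y : V}
    (p : T.Walk x y) : ℝ :=
  (p.edges.map w).sum

/-- `alpha T hT w x y`: max weight of an edge on the unique path in the tree `T` from `x` to `y`. -/
noncomputable def alpha (T : SimpleGraph V) (hT : T.IsTree) (w : Sym2 V → ℝ)
    (x y : V) : ℝ :=
  pathMax w (hT.existsUnique_path x y).exists.choose

/-- `omega T hT w x y`: the tree metric, the sum of weights along the unique path in `T`. -/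
noncomputable def treeOmega (T : SimpleGraph V) (hT : T.IsTree) (w : Sym2 V → ℝ)
    (x y : V) : ℝ :=
  pathSum w (hT.existsUnique_path x y).exists.choose

/-- Ultra-metric as a two-variable function. -/
def IsUltrametricFn (u : V → V → ℝ) : Prop :=
  (∀ x y, 0 ≤ u x y) ∧ (∀ x, u x x = 0) ∧ (∀ x y, u x y = u y x) ∧
    ∀ x y z, u x z ≤ max (u x y) (u y z)

/-!
Spanning trees have the symmetric exchange property: for an edge `e = s(x, y)` of `T`, the
`T'`-path from `x` to `y` leaves the component of `x` in `T - e` along some edge `f`, and then both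
`T - e + f` and `T' - f + e` are trees. If `T` is `w₁`-minimal and `T'` is `w₂`-minimal, this gives
`w₁ e ≤ w₁ f` and `w₂ f ≤ w₂ e`; when `w₁` and `w₂` order the edges alike, `w₂ e = w₂ f`, so
`T' - f + e` is again `w₂`-minimal and shares one more edge with `T`. Induction on `|T \ T'|`.
-/
namespace SimpleGraph

variable {W : Type*} {G : SimpleGraph W}

theorem IsAcyclic.isTree_of_card_edgeSet [Finite W] [Nonempty W] (hG : G.IsAcyclic)
    (hcard : Nat.card G.edgeSet + 1 = Nat.card W) : G.IsTree := by
  obtain ⟨F, hGF, -, hF⟩ := connected_top.exists_isTree_le_of_le_of_isAcyclic le_top hG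
  have hFcard := (isTree_iff_connected_and_card.mp hF).2
  rw [Nat.card_coe_set_eq] at hcard hFcard
  have hGF' : G.edgeSet = F.edgeSet :=
    Set.eq_of_subset_of_ncard_le (edgeSet_mono hGF) (by omega)
  rwa [edgeSet_inj.mp hGF']

theorem IsTree.eq_of_le {T : SimpleGraph W} (hG : G.IsTree) (hT : T.IsAcyclic) (hle : G ≤ T) :
    G = T :=
  (isTree_iff_maximal_isAcyclic.mp hG).2.eq_of_le hT hle

theorem IsAcyclic.not_reachable_deleteEdges_of_mem_edges (hG : G.IsAcyclic) {u v a b : W}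
    {p : G.Walk u v} (hp : p.IsPath) (hab : s(a, b) ∈ p.edges) :
    ¬ (G.deleteEdges {s(a, b)}).Reachable u v := by
  classical
  rw [reachable_deleteEdges_iff_exists_walk]
  rintro ⟨q, hq⟩
  have hpq : (⟨p, hp⟩ : G.Path u v) = q.toPath := (hG.subsingleton_path u v).elim _ _
  exact hq (q.edges_toPath_subset_edges (by rwa [← hpq]))

def exchangeEdge (G : SimpleGraph W) (e : Sym2 W) (a b : W) : SimpleGraph W :=
  G.deleteEdges {e} ⊔ edge a b

theorem edgeSet_exchangeEdge {e : Sym2 W} {a b : W} (hab : a ≠ b) :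
    (G.exchangeEdge e a b).edgeSet = insert s(a, b) (G.edgeSet \ {e}) := by
  rw [exchangeEdge, edgeSet_sup, edgeSet_deleteEdges, edgeSet_edge_of_ne hab,
    Set.union_singleton]

theorem notMem_edgeSet_sdiff_of_not_reachable {e : Sym2 W} {a b : W}
    (hab : ¬ (G.deleteEdges {e}).Reachable a b) : s(a, b) ∉ G.edgeSet \ {e} := by
  intro h
  exact hab (Adj.reachable (by rwa [← edgeSet_deleteEdges] at h))

theorem IsTree.exchangeEdge [Finite W] (hG : G.IsTree) {e : Sym2 W} {a b : W}
    (he : e ∈ G.edgeSet) (hab : ¬ (G.deleteEdges {e}).Reachable a b) :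
    (G.exchangeEdge e a b).IsTree := by
  have := hG.connected.nonempty
  have hne : a ≠ b := by rintro rfl; exact hab .rfl
  have hacyc := (hG.isAcyclic.anti (deleteEdges_le _)).sup_edge_of_not_reachable hab
  refine hacyc.isTree_of_card_edgeSet ?_
  have hcard := (isTree_iff_connected_and_card.mp hG).2
  have hdiff := Set.ncard_sdiff_singleton_add_one he
  rw [Nat.card_coe_set_eq] at hcard ⊢
  rw [← SimpleGraph.exchangeEdge, edgeSet_exchangeEdge hne,
    Set.ncard_insert_of_notMem (notMem_edgeSet_sdiff_of_not_reachable hab),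
    hdiff]
  omega

theorem IsTree.exists_exchange {T T' : SimpleGraph W} (hT : T.IsTree) (hT' : T'.IsTree) {x y : W}
    (he : s(x, y) ∈ T.edgeSet) :
    ∃ a b, s(a, b) ∈ T'.edgeSet ∧ ¬ (T.deleteEdges {s(x, y)}).Reachable a b ∧
      ¬ (T'.deleteEdges {s(a, b)}).Reachable x y := by
  have hxy : ¬ (T.deleteEdges {s(x, y)}).Reachable x y :=
    isAcyclic_iff_forall_adj_isBridge.mp hT.isAcyclic he
  obtain ⟨p, hp, -⟩ := hT'.existsUnique_path x y
  obtain ⟨d, hd, ha, hb⟩ :=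
    p.exists_boundary_dart {v | (T.deleteEdges {s(x, y)}).Reachable x v} .rfl hxy
  have hdp : s(d.fst, d.snd) ∈ p.edges := List.mem_map_of_mem hd
  exact ⟨d.fst, d.snd, p.edges_subset_edgeSet hdp, fun h => hb (ha.trans h),
    hT'.isAcyclic.not_reachable_deleteEdges_of_mem_edges hp hdp⟩

end SimpleGraph

section MinimumSpanningTree

variable {W : Type*} [Fintype W]

theorem totalWeight_eq_finsum (w : Sym2 W → ℝ) (T : SimpleGraph W) :
    totalWeight w T = ∑ᶠ e ∈ T.edgeSet, w e :=
  (finsum_mem_eq_finite_toFinset_sum w _).symm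

theorem totalWeight_exchangeEdge (w : Sym2 W → ℝ) {T : SimpleGraph W} {e : Sym2 W} {a b : W}
    (he : e ∈ T.edgeSet) (hab : ¬ (T.deleteEdges {e}).Reachable a b) :
    totalWeight w (T.exchangeEdge e a b) = totalWeight w T - w e + w s(a, b) := by
  have hne : a ≠ b := by rintro rfl; exact hab .rfl
  have hT := finsum_mem_add_sdiff (f := w) (Set.singleton_subset_iff.mpr he) (Set.toFinite _)
  rw [finsum_mem_singleton] at hT
  rw [totalWeight_eq_finsum, totalWeight_eq_finsum, edgeSet_exchangeEdge hne,
    finsum_mem_insert _ (notMem_edgeSet_sdiff_of_not_reachable hab) (Set.toFinite _), ← hT]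
  ring

theorem SimpleGraph.IsTree.exists_isMST (w : Sym2 W → ℝ) {T : SimpleGraph W} (hT : T.IsTree) :
    ∃ T', IsMST w T' := by
  obtain ⟨T', hT', hmin⟩ := Set.exists_min_image {S : SimpleGraph W | S.IsTree} (totalWeight w)
    (Set.toFinite _) ⟨T, hT⟩
  exact ⟨T', hT', hmin⟩

namespace IsMST

variable {w : Sym2 W → ℝ} {T : SimpleGraph W} {e : Sym2 W} {a b : W}

theorem le_of_exchangeEdge (hT : IsMST w T) (he : e ∈ T.edgeSet)
    (hab : ¬ (T.deleteEdges {e}).Reachable a b) : w e ≤ w s(a, b) := by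
  have := hT.2 _ (hT.1.exchangeEdge he hab)
  rw [totalWeight_exchangeEdge w he hab] at this
  linarith

theorem exchangeEdge (hT : IsMST w T) (he : e ∈ T.edgeSet)
    (hab : ¬ (T.deleteEdges {e}).Reachable a b) (hw : w s(a, b) = w e) :
    IsMST w (T.exchangeEdge e a b) :=
  ⟨hT.1.exchangeEdge he hab, fun T' hT' => by
    rw [totalWeight_exchangeEdge w he hab, hw, sub_add_cancel]
    exact hT.2 T' hT'⟩

theorem of_isMST_of_forall_le_iff {w₁ w₂ : Sym2 W → ℝ} (hw : ∀ e f, w₁ e ≤ w₁ f ↔ w₂ e ≤ w₂ f)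
    (hT : IsMST w₁ T) {T' : SimpleGraph W} (hT' : IsMST w₂ T') : IsMST w₂ T := by
  induction hn : (T.edgeSet \ T'.edgeSet).ncard generalizing T' with
  | zero =>
    have hle : T ≤ T' := by
      rwa [Set.ncard_eq_zero, Set.sdiff_eq_empty, edgeSet_subset_edgeSet] at hn
    rwa [hT.1.eq_of_le hT'.1.isAcyclic hle]
  | succ n ih =>
    obtain ⟨e, heT, heT'⟩ := Set.nonempty_of_ncard_ne_zero (s := T.edgeSet \ T'.edgeSet) (by omega)
    induction e using Sym2.ind with | _ x y
    obtain ⟨a, b, hfT', hab, hxy⟩ := hT.1.exists_exchange hT'.1 heT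
    have hw₂ : w₂ s(x, y) = w₂ s(a, b) :=
      le_antisymm ((hw _ _).mp (hT.le_of_exchangeEdge heT hab)) (hT'.le_of_exchangeEdge hfT' hxy)
    have hfT : s(a, b) ∉ T.edgeSet := fun h =>
      notMem_edgeSet_sdiff_of_not_reachable hab ⟨h, fun hfe => heT' (hfe ▸ hfT')⟩
    have hdiff : T.edgeSet \ (T'.exchangeEdge s(a, b) x y).edgeSet
        = (T.edgeSet \ T'.edgeSet) \ {s(x, y)} := by
      rw [edgeSet_exchangeEdge (T.mem_edgeSet.mp heT).ne]
      ext f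
      simp only [Set.mem_sdiff, Set.mem_insert_iff, Set.mem_singleton_iff]
      grind
    refine ih (hT'.exchangeEdge hfT' hxy hw₂) ?_
    rw [hdiff, Set.ncard_sdiff_singleton_of_mem (Set.mem_sdiff_of_mem heT heT'), hn,
      Nat.add_sub_cancel]

theorem of_forall_le_iff {w₁ w₂ : Sym2 W → ℝ} (hw : ∀ e f, w₁ e ≤ w₁ f ↔ w₂ e ≤ w₂ f)
    (hT : IsMST w₁ T) : IsMST w₂ T :=
  have ⟨_, hT'⟩ := hT.1.exists_isMST w₂
  hT.of_isMST_of_forall_le_iff hw hT'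

end IsMST

end MinimumSpanningTree

theorem mst_invariance_strictMono_general (w : Sym2 V → ℝ)
    (g : ℝ → ℝ) (hg : StrictMono g) (T : SimpleGraph V) :
    IsMST w T ↔ IsMST (g ∘ w) T :=
  have hw (e f : Sym2 V) : w e ≤ w f ↔ (g ∘ w) e ≤ (g ∘ w) f := hg.le_iff_le.symm
  ⟨IsMST.of_forall_le_iff hw, IsMST.of_forall_le_iff fun e f => (hw e f).symm⟩

/-- MSTs are invariant under strictly increasing transformations of weights. -/
theorem mst_invariance_strictMono (hV : 2 ≤ Fintype.card V) (w : Sym2 V → ℝ)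
    (g : ℝ → ℝ) (hg : StrictMono g) (T : SimpleGraph V) :
    IsMST w T ↔ IsMST (g ∘ w) T :=
  mst_invariance_strictMono_general w g hg T
end

section
/- Let O be a finite set. The single linkage operator SL is the unique operator E from the set of metrics on O to itself whose image is exactly the set of ultra-metrics on O and which satisfies: (a) E(E(d)) = E(d), (b) E(d) ≤ d pointwise, and (c) d ≤ d' pointwise implies E(d) ≤ E(d') pointwise, for all metrics d, d'. -/
open SimpleGraph Finset

variable {V : Type*} [Fintype V] [DecidableEq V]

section

variable {α : Type*}

lemma IsUltrametric.isMetric {u : Sym2 α → ℝ} (hu : IsUltrametric u) : IsMetric u := by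
  refine ⟨hu.1, fun x y z => (hu.2 x y z).trans ?_⟩
  exact max_le_add_of_nonneg (hu.1.1 _) (hu.1.1 _)

lemma isUltrametric_zero : IsUltrametric (0 : Sym2 α → ℝ) :=
  ⟨⟨fun _ => le_rfl, fun _ => rfl⟩, fun _ _ _ => by simp⟩

lemma IsMetric.nonneg {d : Sym2 α → ℝ} (hd : IsMetric d) : 0 ≤ d :=
  hd.1.1

lemma le_SL {d u : Sym2 α → ℝ} (hu : IsUltrametric u) (hud : u ≤ d) : u ≤ SL d := by
  intro e
  refine le_csSup ⟨d e, ?_⟩ ⟨u, hu, hud, rfl⟩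
  rintro _ ⟨v, -, hvd, rfl⟩
  exact hvd e

/-- The bound `0 ≤ c` is needed because `sSup ∅ = 0` in `ℝ`. -/
lemma SL_apply_le {d : Sym2 α → ℝ} {e : Sym2 α} {c : ℝ}
    (h : ∀ u, IsUltrametric u → u ≤ d → u e ≤ c) (hc : 0 ≤ c) : SL d e ≤ c := by
  refine Real.sSup_le ?_ hc
  rintro _ ⟨u, hu, hud, rfl⟩
  exact h u hu hud

lemma SL_le_self {d : Sym2 α → ℝ} (hd : 0 ≤ d) : SL d ≤ d :=
  fun e => SL_apply_le (fun _ _ hud => hud e) (hd e)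

lemma SL_nonneg {d : Sym2 α → ℝ} (hd : 0 ≤ d) : 0 ≤ SL d :=
  le_SL isUltrametric_zero hd

lemma SL_mono {d d' : Sym2 α → ℝ} (hd : 0 ≤ d) (hdd' : d ≤ d') : SL d ≤ SL d' :=
  fun e => SL_apply_le (fun _ hu hud => le_SL hu (hud.trans hdd') e)
    (SL_nonneg (hd.trans hdd') e)

lemma SL_isUltrametric {d : Sym2 α → ℝ} (hd : 0 ≤ d) : IsUltrametric (SL d) := by
  have hdiag (x : α) : SL d s(x, x) = 0 :=
    (SL_apply_le (fun u hu _ => (hu.1.2 x).le) le_rfl).antisymm (SL_nonneg hd _)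
  have hmax (x y z : α) : SL d s(x, z) ≤ max (SL d s(x, y)) (SL d s(y, z)) := by
    refine SL_apply_le (fun u hu hud => ?_) (le_max_of_le_left (SL_nonneg hd _))
    exact (hu.2 x y z).trans (max_le_max (le_SL hu hud _) (le_SL hu hud _))
  exact ⟨⟨SL_nonneg hd, hdiag⟩, hmax⟩

lemma SL_eq_self {u : Sym2 α → ℝ} (hu : IsUltrametric u) : SL u = u :=
  (SL_le_self hu.1.1).antisymm (le_SL hu le_rfl)

lemma apply_eq_self_of_idempotent {E : (Sym2 α → ℝ) → (Sym2 α → ℝ)}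
    (hsurj : ∀ u, IsUltrametric u → ∃ d, IsMetric d ∧ E d = u)
    (hidem : ∀ d, IsMetric d → E (E d) = E d) {u : Sym2 α → ℝ} (hu : IsUltrametric u) :
    E u = u := by
  obtain ⟨d, hd, rfl⟩ := hsurj u hu
  exact hidem d hd

/-- `SL d` is squeezed: it is an ultra-metric below `d`, hence fixed by `E` and below `E d`. -/
lemma eq_SL_of_fixes_ultrametrics {E : (Sym2 α → ℝ) → (Sym2 α → ℝ)}
    (hult : ∀ d, IsMetric d → IsUltrametric (E d)) (hfix : ∀ u, IsUltrametric u → E u = u)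
    (hle : ∀ d, IsMetric d → E d ≤ d)
    (hmono : ∀ d d', IsMetric d → IsMetric d' → d ≤ d' → E d ≤ E d')
    {d : Sym2 α → ℝ} (hd : IsMetric d) : E d = SL d := by
  have hSL : IsUltrametric (SL d) := SL_isUltrametric hd.nonneg
  refine (le_SL (hult d hd) (hle d hd)).antisymm ?_
  calc SL d = E (SL d) := (hfix _ hSL).symm
    _ ≤ E d := hmono _ _ hSL.isMetric hd (SL_le_self hd.nonneg)

end

/-- SL is the unique operator on metrics with image the ultra-metrics
satisfying idempotence, `E d ≤ d`, and monotonicity. -/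
theorem SL_unique_characterization :
    ((∀ d : Sym2 V → ℝ, IsMetric d → IsUltrametric (SL d)) ∧
      (∀ u : Sym2 V → ℝ, IsUltrametric u → ∃ d : Sym2 V → ℝ, IsMetric d ∧ SL d = u) ∧
      (∀ d : Sym2 V → ℝ, IsMetric d → SL (SL d) = SL d) ∧
      (∀ d : Sym2 V → ℝ, IsMetric d → SL d ≤ d) ∧
      (∀ d d' : Sym2 V → ℝ, IsMetric d → IsMetric d' → d ≤ d' → SL d ≤ SL d')) ∧
    ∀ E : (Sym2 V → ℝ) → (Sym2 V → ℝ),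
      (∀ d : Sym2 V → ℝ, IsMetric d → IsUltrametric (E d)) →
      (∀ u : Sym2 V → ℝ, IsUltrametric u → ∃ d : Sym2 V → ℝ, IsMetric d ∧ E d = u) →
      (∀ d : Sym2 V → ℝ, IsMetric d → E (E d) = E d) →
      (∀ d : Sym2 V → ℝ, IsMetric d → E d ≤ d) →
      (∀ d d' : Sym2 V → ℝ, IsMetric d → IsMetric d' → d ≤ d' → E d ≤ E d') →
      ∀ d : Sym2 V → ℝ, IsMetric d → E d = SL d := by
  refine ⟨⟨fun d hd => SL_isUltrametric hd.nonneg,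
    fun u hu => ⟨u, hu.isMetric, SL_eq_self hu⟩,
    fun d hd => SL_eq_self (SL_isUltrametric hd.nonneg),
    fun d hd => SL_le_self hd.nonneg,
    fun _ _ hd _ hdd' => SL_mono hd.nonneg hdd'⟩, ?_⟩
  intro E hult hsurj hidem hle hmono d hd
  exact eq_SL_of_fixes_ultrametrics hult (fun u => apply_eq_self_of_idempotent hsurj hidem)
    hle hmono hd
end

section
/- For a finite set O, a spanning tree T of K_O, and a weight w on K_O, the following are equivalent: (1) T is a minimum spanning tree of w; (2) w(x,y) ≥ α(T, w|_T)(x,y) for all x, y ∈ O, where α(T, w|_T)(x,y) is the maximum w-weight of an edge on the path in T from x to y. -/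
open SimpleGraph Finset

variable {V : Type*} [Fintype V] [DecidableEq V]

/-!
Both directions are exchange arguments. Deleting an edge `f` from a spanning tree and adding an
edge `s(x, y)` between the two components this creates gives a spanning tree, of weight changed by
`w s(x, y) - w f`. If `T` is minimal, exchanging an edge of the `T`-path from `x` to `y` for
`s(x, y)` shows that this edge weighs at most `w s(x, y)`. Conversely, an edge `s(x, y)` of another
spanning tree `T'` that is not in `T` can be exchanged for an edge of the `T`-path from `x` to `y`
that leaves the component of `x` in `T'` minus `s(x, y)`; this does not increase the weight and
brings `T'` one edge closer to `T`, so induction on the number of edges of `T'` outside `T` gives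
`totalWeight w T ≤ totalWeight w T'`.
-/

section

variable {w : Sym2 V → ℝ} {T : SimpleGraph V}

section
omit [Fintype V] [DecidableEq V]

namespace SimpleGraph

variable {G : SimpleGraph V}

lemma reachable_deleteEdges_or {u a : V} (h : G.Reachable u a) (b : V) :
    (G.deleteEdges {s(a, b)}).Reachable u a ∨ (G.deleteEdges {s(a, b)}).Reachable u b := by
  obtain ⟨p⟩ := h
  generalize hv : a = v at p
  induction p with
  | nil => exact .inl (hv ▸ .rfl)
  | @cons u u' _ hadj _ ih =>
    subst hv
    by_cases he : s(u, u') = s(a, b)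
    · obtain ⟨h, -⟩ | ⟨h, -⟩ := Sym2.eq_iff.mp he
      · exact .inl (h ▸ .rfl)
      · exact .inr (h ▸ .rfl)
    · have hadj' : (G.deleteEdges {s(a, b)}).Adj u u' := by simp [hadj, he]
      exact (ih rfl).imp hadj'.reachable.trans hadj'.reachable.trans

/-- Deleting an edge of a connected graph leaves at most two components. -/
lemma Connected.deleteEdges_sup_edge {e : Sym2 V} {x y : V} (hG : G.Connected)
    (hxy : ¬(G.deleteEdges {e}).Reachable x y) :
    (G.deleteEdges {e} ⊔ edge x y).Connected := by
  induction e using Sym2.ind with | _ a b => ?_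
  set H := G.deleteEdges {s(a, b)}
  have hab : ∀ u, H.Reachable u a ∨ H.Reachable u b :=
    fun u => reachable_deleteEdges_or (hG.preconnected u a) b
  have hxy' : ∀ u, H.Reachable u x ∨ H.Reachable u y := by
    intro u
    rcases hab u with hu | hu <;> rcases hab x with hx | hx <;> rcases hab y with hy | hy
    all_goals first
      | exact absurd (hx.trans hy.symm) hxy
      | exact .inl (hu.trans hx.symm)
      | exact .inr (hu.trans hy.symm)
  have hx : ∀ u, (H ⊔ edge x y).Reachable u x := by
    intro u
    rcases hxy' u with hu | hu
    · exact hu.mono le_sup_left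
    · refine (hu.mono le_sup_left).trans (Adj.reachable ?_)
      have : y ≠ x := fun h => hxy (h ▸ .rfl)
      simp [edge_adj, this]
  have : Nonempty V := ⟨x⟩
  exact ⟨fun u v => (hx u).trans (hx v).symm⟩

lemma IsTree.deleteEdges_sup_edge {e : Sym2 V} {x y : V} (hT : T.IsTree)
    (hxy : ¬(T.deleteEdges {e}).Reachable x y) :
    (T.deleteEdges {e} ⊔ edge x y).IsTree :=
  ⟨hT.connected.deleteEdges_sup_edge hxy,
    (hT.isAcyclic.anti (deleteEdges_le _)).sup_edge_of_not_reachable hxy⟩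

lemma IsAcyclic.not_reachable_deleteEdges_of_mem_edges_s5 (hT : T.IsAcyclic) {x y : V}
    {p : T.Walk x y} (hp : p.IsPath) {f : Sym2 V} (hf : f ∈ p.edges) :
    ¬(T.deleteEdges {f}).Reachable x y := by
  classical
  induction f using Sym2.ind with | _ a b => ?_
  rw [reachable_deleteEdges_iff_exists_walk]
  rintro ⟨q, hq⟩
  have : (q.toPath : T.Walk x y) = p :=
    congrArg Subtype.val ((hT.subsingleton_path x y).elim q.toPath ⟨p, hp⟩)
  exact hq (q.edges_toPath_subset_edges (this ▸ hf))

end SimpleGraph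

lemma le_pathMax {x y : V} {p : T.Walk x y} {f : Sym2 V} (hf : f ∈ p.edges) :
    w f ≤ pathMax w p :=
  List.le_max_of_le' 0 (List.mem_map_of_mem hf) le_rfl

lemma pathMax_le {x y : V} {p : T.Walk x y} {c : ℝ} (hc : 0 ≤ c)
    (h : ∀ f ∈ p.edges, w f ≤ c) : pathMax w p ≤ c := by
  unfold pathMax
  generalize p.edges = l at h
  induction l with
  | nil => simpa
  | cons f l ih =>
    simp only [List.map_cons, List.foldr_cons]
    exact max_le (h f List.mem_cons_self) (ih fun g hg => h g (List.mem_cons_of_mem _ hg))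

def PathOptimal (w : Sym2 V → ℝ) (T : SimpleGraph V) : Prop :=
  ∀ x y (p : T.Walk x y), p.IsPath → ∀ f ∈ p.edges, w f ≤ w s(x, y)

lemma forall_alpha_le_iff_pathOptimal (hw : ∀ e, 0 ≤ w e) (hT : T.IsTree) :
    (∀ x y, alpha T hT w x y ≤ w s(x, y)) ↔ PathOptimal w T := by
  have hpath x y := (hT.existsUnique_path x y).exists.choose_spec
  refine ⟨fun h x y p hp f hf => ?_, fun h x y => pathMax_le (hw _) (h x y _ (hpath x y))⟩
  rw [← (hT.existsUnique_path x y).unique (hpath x y) hp] at hf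
  exact (le_pathMax hf).trans (h x y)

end

lemma totalWeight_deleteEdges_sup_edge {G : SimpleGraph V} {e : Sym2 V}
    {x y : V} (hG : G.Connected) (hxy : ¬(G.deleteEdges {e}).Reachable x y) :
    totalWeight w (G.deleteEdges {e} ⊔ edge x y) = totalWeight w G - w e + w s(x, y) := by
  have he : e ∈ G.edgeSet := by
    by_contra he
    rw [deleteEdges_eq_self.mpr (Set.disjoint_singleton_right.mpr he)] at hxy
    exact hxy (hG.preconnected x y)
  have hne : x ≠ y := fun h => hxy (h ▸ .rfl)
  have hxyG : s(x, y) ∉ G.edgeSet \ {e} := fun h =>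
    hxy (Adj.reachable ((deleteEdges_adj ..).mpr h))
  have hset : (Set.toFinite (G.deleteEdges {e} ⊔ edge x y).edgeSet).toFinset =
      insert s(x, y) ((Set.toFinite G.edgeSet).toFinset.erase e) := by
    ext f
    simp [edgeSet_edge_of_ne hne, and_comm]
  rw [totalWeight, totalWeight, hset, Finset.sum_insert fun h => hxyG (by simpa [and_comm] using h),
    Finset.sum_erase_eq_sub (by simpa using he)]
  ring

lemma IsMST.pathOptimal (hT : IsMST w T) : PathOptimal w T := by
  intro x y p hp f hf
  have hsep := hT.1.isAcyclic.not_reachable_deleteEdges_of_mem_edges_s5 hp hf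
  have hle := hT.2 _ (hT.1.deleteEdges_sup_edge hsep)
  rw [totalWeight_deleteEdges_sup_edge hT.1.connected hsep] at hle
  linarith

lemma PathOptimal.exists_isTree_exchange (hT : T.IsTree) (hopt : PathOptimal w T)
    {T' : SimpleGraph V} (hT' : T'.IsTree) {x y : V} (hxy : s(x, y) ∈ T'.edgeSet) :
    ∃ T'' : SimpleGraph V, T''.IsTree ∧ totalWeight w T'' ≤ totalWeight w T' ∧
      T''.edgeSet \ T.edgeSet ⊆ (T'.edgeSet \ T.edgeSet) \ {s(x, y)} := by
  set H := T'.deleteEdges {s(x, y)}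
  have hsep : ¬H.Reachable x y :=
    isBridge_iff.mp (isAcyclic_iff_forall_isBridge.mp hT'.isAcyclic hxy)
  obtain ⟨p, hp, -⟩ := hT.existsUnique_path x y
  obtain ⟨d, hd, hx, hy⟩ := p.exists_boundary_dart {v | H.Reachable x v} .rfl hsep
  have hd' : ¬H.Reachable d.fst d.snd := fun h => hy (hx.trans h)
  refine ⟨H ⊔ edge d.fst d.snd, hT'.deleteEdges_sup_edge hd', ?_, ?_⟩
  · have : w s(d.fst, d.snd) ≤ w s(x, y) := hopt x y p hp d.edge (List.mem_map_of_mem hd)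
    rw [totalWeight_deleteEdges_sup_edge hT'.connected hd']
    linarith
  · rintro f ⟨hf, hfT⟩
    rw [edgeSet_sup, edgeSet_deleteEdges] at hf
    rcases hf with hf | hf
    · exact ⟨⟨hf.1, hfT⟩, hf.2⟩
    · exact absurd (edgeSet_edge_subset hf ▸ d.edge_mem) hfT

lemma PathOptimal.isMST (hT : T.IsTree) (hopt : PathOptimal w T) : IsMST w T := by
  refine ⟨hT, fun T' hT' => ?_⟩
  induction hn : (T'.edgeSet \ T.edgeSet).ncard using Nat.strong_induction_on
    generalizing T' with | _ n ih => ?_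
  obtain hsub | ⟨e, heT', heT⟩ := (T'.edgeSet \ T.edgeSet).eq_empty_or_nonempty
  · rw [Set.sdiff_eq_empty, edgeSet_subset_edgeSet] at hsub
    rw [(isTree_iff_minimal_connected.mp hT).eq_of_le hT'.connected hsub]
  · induction e using Sym2.ind with | _ x y => ?_
    obtain ⟨T'', hT'', hle, hsub⟩ := hopt.exists_isTree_exchange hT hT' heT'
    refine (ih _ ?_ T'' hT'' rfl).trans hle
    rw [← hn]
    exact (Set.ncard_le_ncard hsub).trans_lt (Set.ncard_sdiff_singleton_lt_of_mem ⟨heT', heT⟩)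

end

/-- a spanning tree `T` is an MST of `w` iff `w ≥ alpha T w` pointwise. -/
theorem mst_iff_ge_alpha (w : Sym2 V → ℝ) (hw : IsWeight w)
    (T : SimpleGraph V) (hT : T.IsTree) :
    IsMST w T ↔ ∀ x y : V, alpha T hT w x y ≤ w s(x, y) := by
  rw [forall_alpha_le_iff_pathOptimal hw.1 hT]
  exact ⟨IsMST.pathOptimal, PathOptimal.isMST hT⟩
end

section
/- Let O be a finite set and let β : [0,∞) → Partitions(O) be a dendrogram, i.e.: (1) there is r₀ with β(r) = {O} for all r ≥ r₀; (2) r₁ ≤ r₂ implies β(r₁) refines β(r₂); (3) for each r there is ε > 0 with β(t) = β(r) for all t ∈ [r, r+ε]. Then u(x,y) := inf { r > 0 : x and y lie in the same cluster of β(r) } defines an ultra-metric on O. -/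
open SimpleGraph Finset

variable {V : Type*} [Fintype V] [DecidableEq V]

/-! Write `u(x, y)` for the infimum of the positive levels at which `x` and `y` are merged.
Since the partitions only get coarser, `x` and `y` are merged at every level above `u(x, y)`;
so at every level above `max (u(x, y), u(y, z))` the cluster of `y` contains both `x` and `z`,
which gives the ultra-metric inequality. -/

section MergeLevel

variable {α : Type*} (β : ℝ → Setoid α)

noncomputable def mergeLevel (x y : α) : ℝ :=
  sInf {r : ℝ | 0 < r ∧ (β r).r x y}

theorem mergeLevel_nonneg (x y : α) : 0 ≤ mergeLevel β x y :=
  Real.sInf_nonneg fun _ hr => hr.1.le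

theorem mergeLevel_self (x : α) : mergeLevel β x x = 0 := by
  have hall : {r : ℝ | 0 < r ∧ (β r).r x x} = Set.Ioi 0 := by
    ext r
    exact and_iff_left ((β r).refl' x)
  rw [mergeLevel, hall, csInf_Ioi]

theorem mergeLevel_comm (x y : α) : mergeLevel β x y = mergeLevel β y x := by
  simp only [mergeLevel, (β _).comm']

variable {β}

-- `hmerged` is needed because `sInf ∅ = 0` in `ℝ`.
theorem rel_of_mergeLevel_lt (hmono : ∀ r₁ r₂ : ℝ, 0 ≤ r₁ → r₁ ≤ r₂ → β r₁ ≤ β r₂)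
    {x y : α} (hmerged : ∃ r, 0 < r ∧ (β r).r x y) {r : ℝ} (hr : mergeLevel β x y < r) :
    (β r).r x y := by
  obtain ⟨s, ⟨hs, hxy⟩, hsr⟩ := exists_lt_of_csInf_lt hmerged hr
  exact hmono s r hs.le hsr.le hxy

theorem mergeLevel_le_of_forall_lt_rel {x y : α} {a : ℝ} (ha : 0 ≤ a)
    (h : ∀ r, a < r → (β r).r x y) : mergeLevel β x y ≤ a := by
  rw [← csInf_Ioi (a := a)]
  exact csInf_le_csInf ⟨0, fun _ hr => hr.1.le⟩ Set.nonempty_Ioi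
    fun r hr => ⟨ha.trans_lt hr, h r hr⟩

theorem mergeLevel_le_max (hmono : ∀ r₁ r₂ : ℝ, 0 ≤ r₁ → r₁ ≤ r₂ → β r₁ ≤ β r₂)
    (hmerged : ∀ x y : α, ∃ r, 0 < r ∧ (β r).r x y) (x y z : α) :
    mergeLevel β x z ≤ max (mergeLevel β x y) (mergeLevel β y z) :=
  mergeLevel_le_of_forall_lt_rel ((mergeLevel_nonneg β x y).trans (le_max_left _ _))
    fun _ hr => (β _).trans'
      (rel_of_mergeLevel_lt hmono (hmerged x y) ((le_max_left _ _).trans_lt hr))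
      (rel_of_mergeLevel_lt hmono (hmerged y z) ((le_max_right _ _).trans_lt hr))

end MergeLevel

theorem dendrogram_to_ultrametric_general (β : ℝ → Setoid V)
    (h1 : ∃ r₀ : ℝ, 0 ≤ r₀ ∧ ∀ r, r₀ ≤ r → β r = ⊤)
    (h2 : ∀ r₁ r₂ : ℝ, 0 ≤ r₁ → r₁ ≤ r₂ → β r₁ ≤ β r₂) :
    IsUltrametricFn (fun x y : V => sInf {r : ℝ | 0 < r ∧ (β r).r x y}) := by
  obtain ⟨r₀, hr₀, htop⟩ := h1
  have hmerged : ∀ x y : V, ∃ r, 0 < r ∧ (β r).r x y := fun x y =>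
    ⟨r₀ + 1, by linarith, by rw [htop (r₀ + 1) (by linarith)]; trivial⟩
  exact ⟨mergeLevel_nonneg β, mergeLevel_self β, mergeLevel_comm β,
    mergeLevel_le_max h2 hmerged⟩

/-- a dendrogram gives rise to an ultra-metric via
`u(x,y) = inf {r > 0 : x ∼ y in β(r)}`. -/
theorem dendrogram_to_ultrametric (β : ℝ → Setoid V)
    (h1 : ∃ r₀ : ℝ, 0 ≤ r₀ ∧ ∀ r, r₀ ≤ r → β r = ⊤)
    (h2 : ∀ r₁ r₂ : ℝ, 0 ≤ r₁ → r₁ ≤ r₂ → β r₁ ≤ β r₂)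
    (h3 : ∀ r : ℝ, 0 ≤ r → ∃ ε > (0 : ℝ), ∀ t, r ≤ t → t ≤ r + ε → β t = β r) :
    IsUltrametricFn (fun x y : V => sInf {r : ℝ | 0 < r ∧ (β r).r x y}) :=
  dendrogram_to_ultrametric_general β h1 h2
end
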